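/- Let {A_n} be a sequence of n×n symmetric matrices with nonnegative entries and zeros on the diagonal satisfying (BD) and (MF), fix (β, B) ∈ Θ, and let X be an observation from P_{n,β,B}. Define f_n(y) := (β/2) yᵀ A_n y + B Σ_{i=1}^n y_i and I(y) := Σ_{i=1}^n [ ((1+y_i)/2) log((1+y_i)/2) + ((1−y_i)/2) log((1−y_i)/2) ] for y ∈ (−1,1)^n, so that the gradients are (∇f_n(y))_i = β Σ_j A_n(i,j) y_j + B and (∇I(y))_i = arctanh(y_i). Then with b(x) the vector with coordinates b_i(x) := tanh(β m_i(x) + B), one has ‖∇f_n(b(X)) − ∇I(b(X))‖ / √n → 0 in P_{n,β,B}-probability as n → ∞, where ‖·‖ is the Euclidean norm on ℝⁿ. -/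

import Mathlib

open Filter

noncomputable section

/-- Spin configuration in `{-1,1}^n` encoded by a Boolean vector. -/
def spinVec (n : ℕ) (σ : Fin n → Bool) : Fin n → ℝ := fun i => if σ i then 1 else -1

/-- Local field `m_i(x) = ∑_j A i j * x j`. -/
def mloc {n : ℕ} (A : Matrix (Fin n) (Fin n) ℝ) (x : Fin n → ℝ) (i : Fin n) : ℝ :=
  ∑ j, A i j * x j

/-- Average local field `m̄(x)`. -/
def mbar {n : ℕ} (A : Matrix (Fin n) (Fin n) ℝ) (x : Fin n → ℝ) : ℝ :=
  (1 / (n : ℝ)) * ∑ i, mloc A x i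

/-- `T_n(x) = (1/n) ∑_i (m_i(x) - m̄(x))²`. -/
def Tstat {n : ℕ} (A : Matrix (Fin n) (Fin n) ℝ) (x : Fin n → ℝ) : ℝ :=
  (1 / (n : ℝ)) * ∑ i, (mloc A x i - mbar A x) ^ 2

/-- Unnormalized Ising weight `exp((β/2) xᵀAx + B ∑ x_i)`. -/
def isingWt {n : ℕ} (A : Matrix (Fin n) (Fin n) ℝ) (β B : ℝ) (x : Fin n → ℝ) : ℝ :=
  Real.exp (β / 2 * ∑ i, ∑ j, A i j * x i * x j + B * ∑ i, x i)

/-- Probability of the event `E` under the Ising measure `P_{n,β,B}`. -/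
def isingProb {n : ℕ} (A : Matrix (Fin n) (Fin n) ℝ) (β B : ℝ) (E : Set (Fin n → ℝ)) : ℝ :=
  (∑ σ : Fin n → Bool, E.indicator (isingWt A β B) (spinVec n σ)) /
    (∑ σ : Fin n → Bool, isingWt A β B (spinVec n σ))

/-- Expectation of `f` under the Ising measure `P_{n,β,B}`. -/
def isingExp {n : ℕ} (A : Matrix (Fin n) (Fin n) ℝ) (β B : ℝ) (f : (Fin n → ℝ) → ℝ) : ℝ :=
  (∑ σ : Fin n → Bool, f (spinVec n σ) * isingWt A β B (spinVec n σ)) /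
    (∑ σ : Fin n → Bool, isingWt A β B (spinVec n σ))

/-- Pseudo-likelihood equation `Q_n(β,B|x)`. -/
def Qfun {n : ℕ} (A : Matrix (Fin n) (Fin n) ℝ) (β B : ℝ) (x : Fin n → ℝ) : ℝ :=
  ∑ i, mloc A x i * (x i - Real.tanh (β * mloc A x i + B))

/-- Pseudo-likelihood equation `R_n(β,B|x)`. -/
def Rfun {n : ℕ} (A : Matrix (Fin n) (Fin n) ℝ) (β B : ℝ) (x : Fin n → ℝ) : ℝ :=
  ∑ i, (x i - Real.tanh (β * mloc A x i + B))

/-- `b_i(x) = tanh(β m_i(x) + B)`. -/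
def bvec {n : ℕ} (A : Matrix (Fin n) (Fin n) ℝ) (β B : ℝ) (x : Fin n → ℝ) : Fin n → ℝ :=
  fun i => Real.tanh (β * mloc A x i + B)

/-- `f_n(y) = (β/2) yᵀAy + B ∑ y_i`. -/
def fN {n : ℕ} (A : Matrix (Fin n) (Fin n) ℝ) (β B : ℝ) (y : Fin n → ℝ) : ℝ :=
  β / 2 * ∑ i, ∑ j, A i j * y i * y j + B * ∑ i, y i

/-- Entropy term `I(y)` (with `0 log 0 = 0`, as `Real.log 0 = 0`). -/
def entI {n : ℕ} (y : Fin n → ℝ) : ℝ :=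
  ∑ i, ((1 + y i) / 2 * Real.log ((1 + y i) / 2) + (1 - y i) / 2 * Real.log ((1 - y i) / 2))

/-- Inverse hyperbolic tangent `arctanh(y) = (1/2) log((1+y)/(1-y))`. -/
def arctanhR (y : ℝ) : ℝ := (1 / 2) * Real.log ((1 + y) / (1 - y))

/-! Since `arctanhR (b_i x) = β m_i(x) + B`, the gradient gap at `b(x)` is `-β A (x - b(x))`, so by
Markov's inequality it suffices to bound `E ‖A (X - b(X))‖² = ∑ A_ij A_ik E[(X_j - b_j)(X_k - b_k)]`
by `o(n)`. Diagonal terms are at most `4`. Because `b_j` is the conditional mean of `X_j` given the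
other spins, `E[(X_j - b_j) g] = 0` whenever `g` does not depend on `x_j` (pair each configuration
with the one whose `j`-th spin is flipped). For `j ≠ k` take for `g` the residual `x_k - b_k` with
`x_j` set to `0`; as `tanh` is 1-Lipschitz this changes the residual by at most `|β| A_kj`, so
`E[(X_j - b_j)(X_k - b_k)] ≤ 2 |β| A_kj`. Summing, with (BD) and `A_ij A_ik ≤ (A_ij² + A_ik²)/2`,
the expectation is at most `(4 + 2|β|γ) ∑ A_ij²`, which is `o(n)` by (MF). -/

namespace Real

theorem hasDerivAt_tanh (x : ℝ) : HasDerivAt tanh (1 / cosh x ^ 2) x := by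
  have h := (hasDerivAt_sinh x).div (hasDerivAt_cosh x) (cosh_pos x).ne'
  rw [show tanh = sinh / cosh from funext tanh_eq_sinh_div_cosh]
  refine h.congr_deriv ?_
  rw [← sq, ← sq, cosh_sq_sub_sinh_sq x]

theorem abs_tanh_sub_tanh_le (u v : ℝ) : |tanh u - tanh v| ≤ |u - v| := by
  have hderiv_le (x : ℝ) : ‖1 / cosh x ^ 2‖ ≤ 1 := by
    rw [norm_of_nonneg (by positivity), div_le_one (by positivity)]
    nlinarith [one_le_cosh x]
  simpa [norm_eq_abs] using convex_univ.norm_image_sub_le_of_norm_hasDerivWithin_le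
    (fun x _ => (hasDerivAt_tanh x).hasDerivWithinAt) (fun x _ => hderiv_le x)
    (Set.mem_univ v) (Set.mem_univ u)

theorem sub_tanh_eq_add_tanh_mul_exp {s : ℝ} (hs : s = 1 ∨ s = -1) (x : ℝ) :
    s - tanh x = (s + tanh x) * exp (-(2 * s * x)) := by
  have hexp : exp x * exp (-x) = 1 := by rw [← exp_add, add_neg_cancel, exp_zero]
  rw [tanh_eq]
  rcases hs with rfl | rfl
  · rw [show -(2 * 1 * x) = -x + -x by ring, exp_add]
    field_simp
    linear_combination (-2 * exp (-x)) * hexp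
  · rw [show -(2 * -1 * x) = x + x by ring, exp_add]
    field_simp
    linear_combination (2 * exp x) * hexp

end Real

theorem arctanhR_tanh (x : ℝ) : arctanhR (Real.tanh x) = x := by
  rw [arctanhR, ← Real.artanh_eq_half_log ⟨(Real.neg_one_lt_tanh x).le, (Real.tanh_lt_one x).le⟩,
    Real.artanh_tanh]

theorem spinVec_apply_eq_one_or (n : ℕ) (σ : Fin n → Bool) (j : Fin n) :
    spinVec n σ j = 1 ∨ spinVec n σ j = -1 := by
  unfold spinVec; cases σ j <;> simp

theorem abs_spinVec_apply (n : ℕ) (σ : Fin n → Bool) (j : Fin n) : |spinVec n σ j| = 1 := by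
  rcases spinVec_apply_eq_one_or n σ j with h | h <;> simp [h]

theorem spinVec_update_not (n : ℕ) (σ : Fin n → Bool) (j : Fin n) :
    spinVec n (Function.update σ j (!σ j)) = Function.update (spinVec n σ) j (-spinVec n σ j) := by
  funext i
  rcases eq_or_ne i j with rfl | h
  · unfold spinVec; cases σ i <;> simp
  · simp [spinVec, Function.update_of_ne h]

theorem update_apply_eq_add_ite {n : ℕ} (x : Fin n → ℝ) (j : Fin n) (c : ℝ) (i : Fin n) :
    Function.update x j c i = x i + if i = j then c - x j else 0 := by
  rcases eq_or_ne i j with rfl | h <;> simp [*]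

theorem mloc_update {n : ℕ} (A : Matrix (Fin n) (Fin n) ℝ) (x : Fin n → ℝ) (j k : Fin n) (c : ℝ) :
    mloc A (Function.update x j c) k = mloc A x k + A k j * (c - x j) := by
  simp [mloc, update_apply_eq_add_ite, mul_add, Finset.sum_add_distrib]

theorem mloc_sub {n : ℕ} (A : Matrix (Fin n) (Fin n) ℝ) (x y : Fin n → ℝ) (i : Fin n) :
    mloc A (fun l => x l - y l) i = mloc A x i - mloc A y i := by
  simp only [mloc, mul_sub, Finset.sum_sub_distrib]

theorem fN_update {n : ℕ} {A : Matrix (Fin n) (Fin n) ℝ} (hA : A.IsSymm) {j : Fin n}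
    (hj : A j j = 0) (β B : ℝ) (x : Fin n → ℝ) (c : ℝ) :
    fN A β B (Function.update x j c) = fN A β B x + (c - x j) * (β * mloc A x j + B) := by
  have hcol : ∑ i, A i j * x i = mloc A x j :=
    Finset.sum_congr rfl fun i _ => by rw [hA.apply j i]
  have hrow : ∑ l, A j l * (c - x j) * x l = (c - x j) * mloc A x j := by
    rw [mloc, Finset.mul_sum]; exact Finset.sum_congr rfl fun l _ => by ring
  simp only [fN, update_apply_eq_add_ite, mul_add, add_mul, mul_ite, ite_mul, mul_zero, zero_mul,
    Finset.sum_add_distrib, Finset.sum_ite_irrel, Finset.sum_const_zero, Finset.sum_ite_eq',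
    Finset.mem_univ, if_true, hj, ← Finset.sum_mul, hcol, hrow]
  ring

theorem mloc_sq {n : ℕ} (A : Matrix (Fin n) (Fin n) ℝ) (v : Fin n → ℝ) (i : Fin n) :
    mloc A v i ^ 2 = ∑ j, ∑ k, A i j * A i k * (v j * v k) := by
  rw [sq, mloc, Finset.sum_mul_sum]
  exact Finset.sum_congr rfl fun j _ => Finset.sum_congr rfl fun k _ => by ring

theorem sum_mul_mul_le_mul_sum_sq {n : ℕ} {A : Matrix (Fin n) (Fin n) ℝ} (hA : A.IsSymm)
    (hnn : ∀ i j, 0 ≤ A i j) {γ : ℝ} (hγ : ∀ i, ∑ j, A i j ≤ γ) :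
    ∑ i, ∑ j, ∑ k, A i j * A i k * A k j ≤ γ * ∑ i, ∑ j, A i j ^ 2 := by
  have hamgm (i j k : Fin n) :
      A i j * A i k * A k j ≤ (A i j ^ 2 * A k j + A i k ^ 2 * A k j) / 2 := by
    nlinarith [mul_nonneg (sq_nonneg (A i j - A i k)) (hnn k j)]
  have hcol (j : Fin n) : ∑ k, A k j ≤ γ := by
    simpa only [hA.apply j] using hγ j
  have hγT : γ * ∑ i, ∑ j, A i j ^ 2 = ∑ i, ∑ j, A i j ^ 2 * γ := by
    rw [mul_comm]
    simp only [Finset.sum_mul]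
  have h₁ : ∑ i, ∑ j, ∑ k, A i j ^ 2 * A k j ≤ γ * ∑ i, ∑ j, A i j ^ 2 := by
    simp only [← Finset.mul_sum, hγT]
    gcongr with i _ j _
    exact hcol j
  have h₂ : ∑ i, ∑ j, ∑ k, A i k ^ 2 * A k j ≤ γ * ∑ i, ∑ j, A i j ^ 2 := by
    have hrow (i : Fin n) : ∑ j, ∑ k, A i k ^ 2 * A k j = ∑ k, A i k ^ 2 * ∑ j, A k j := by
      rw [Finset.sum_comm]
      simp only [Finset.mul_sum]
    simp only [hrow, hγT]
    gcongr with i _ k _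
    exact hγ k
  calc ∑ i, ∑ j, ∑ k, A i j * A i k * A k j
      ≤ ∑ i, ∑ j, ∑ k, (A i j ^ 2 * A k j + A i k ^ 2 * A k j) / 2 := by
        gcongr with i _ j _ k _; exact hamgm i j k
    _ ≤ γ * ∑ i, ∑ j, A i j ^ 2 := by
        simp only [← Finset.sum_div, Finset.sum_add_distrib]
        linarith

theorem isingWt_eq_exp_fN {n : ℕ} (A : Matrix (Fin n) (Fin n) ℝ) (β B : ℝ) (x : Fin n → ℝ) :
    isingWt A β B x = Real.exp (fN A β B x) := rfl

section IsingExpectation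

variable {n : ℕ} (A : Matrix (Fin n) (Fin n) ℝ) (β B : ℝ)

theorem sum_isingWt_pos : 0 < ∑ σ : Fin n → Bool, isingWt A β B (spinVec n σ) :=
  Finset.sum_pos (fun _ _ => Real.exp_pos _) Finset.univ_nonempty

theorem isingExp_add (f g : (Fin n → ℝ) → ℝ) :
    isingExp A β B (fun x => f x + g x) = isingExp A β B f + isingExp A β B g := by
  simp only [isingExp, add_mul, Finset.sum_add_distrib, add_div]

theorem isingExp_const_mul (c : ℝ) (f : (Fin n → ℝ) → ℝ) :
    isingExp A β B (fun x => c * f x) = c * isingExp A β B f := by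
  simp only [isingExp, mul_assoc, ← Finset.mul_sum, mul_div_assoc]

theorem isingExp_sum {ι : Type*} (s : Finset ι) (f : ι → (Fin n → ℝ) → ℝ) :
    isingExp A β B (fun x => ∑ i ∈ s, f i x) = ∑ i ∈ s, isingExp A β B (f i) := by
  simp only [isingExp, Finset.sum_mul, ← Finset.sum_div]
  rw [Finset.sum_comm]

theorem isingExp_const (c : ℝ) : isingExp A β B (fun _ => c) = c := by
  rw [isingExp, ← Finset.mul_sum, mul_div_cancel_right₀ _ (sum_isingWt_pos A β B).ne']

variable {A β B}

theorem isingExp_mono {f g : (Fin n → ℝ) → ℝ} (h : ∀ σ, f (spinVec n σ) ≤ g (spinVec n σ)) :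
    isingExp A β B f ≤ isingExp A β B g :=
  div_le_div_of_nonneg_right (Finset.sum_le_sum fun σ _ =>
    mul_le_mul_of_nonneg_right (h σ) (Real.exp_pos _).le) (sum_isingWt_pos A β B).le

theorem isingProb_nonneg (E : Set (Fin n → ℝ)) : 0 ≤ isingProb A β B E :=
  div_nonneg (Finset.sum_nonneg fun _ _ => Set.indicator_nonneg (fun _ _ => (Real.exp_pos _).le) _)
    (sum_isingWt_pos A β B).le

theorem isingProb_le_isingExp_div {E : Set (Fin n → ℝ)} {f : (Fin n → ℝ) → ℝ} {c : ℝ}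
    (hc : 0 < c) (hf : ∀ x, 0 ≤ f x) (hE : ∀ x ∈ E, c ≤ f x) :
    isingProb A β B E ≤ isingExp A β B f / c := by
  have hsum : (∑ σ : Fin n → Bool, E.indicator (isingWt A β B) (spinVec n σ)) * c ≤
      ∑ σ : Fin n → Bool, f (spinVec n σ) * isingWt A β B (spinVec n σ) := by
    rw [Finset.sum_mul]
    refine Finset.sum_le_sum fun σ _ => ?_
    have hw := (Real.exp_pos (fN A β B (spinVec n σ))).le
    by_cases hx : spinVec n σ ∈ E
    · rw [Set.indicator_of_mem hx, mul_comm]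
      exact mul_le_mul_of_nonneg_right (hE _ hx) hw
    · rw [Set.indicator_of_notMem hx, zero_mul]
      exact mul_nonneg (hf _) hw
  rw [le_div_iff₀ hc, isingProb, div_mul_eq_mul_div, isingExp]
  exact div_le_div_of_nonneg_right hsum (sum_isingWt_pos A β B).le

end IsingExpectation

section IsingModel

variable {n : ℕ} {A : Matrix (Fin n) (Fin n) ℝ} {β B : ℝ}

theorem isingExp_residual_mul_eq_zero (hA : A.IsSymm) {j : Fin n} (hj : A j j = 0)
    (g : (Fin n → ℝ) → ℝ) (hg : ∀ x c, g (Function.update x j c) = g x) :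
    isingExp A β B (fun x => (x j - bvec A β B x j) * g x) = 0 := by
  rw [isingExp, div_eq_zero_iff]
  refine .inl <| Finset.sum_ninvolution (fun σ => Function.update σ j (!σ j)) (fun σ => ?_)
    (fun σ _ hflip => ?_) (fun _ => Finset.mem_univ _) (fun σ => by simp)
  · rw [spinVec_update_not]
    set x := spinVec n σ
    have hm : mloc A (Function.update x j (-x j)) j = mloc A x j := by rw [mloc_update, hj]; ring
    have hw : isingWt A β B (Function.update x j (-x j)) =
        isingWt A β B x * Real.exp (-(2 * x j * (β * mloc A x j + B))) := by
      rw [isingWt_eq_exp_fN, isingWt_eq_exp_fN, fN_update hA hj, ← Real.exp_add]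
      congr 1
      ring
    have key := Real.sub_tanh_eq_add_tanh_mul_exp (spinVec_apply_eq_one_or n σ j)
      (β * mloc A x j + B)
    simp only [bvec, hm, hg, hw, Function.update_self]
    linear_combination (g x * isingWt A β B x) * key
  · simpa using congrFun hflip j

theorem abs_spinVec_sub_bvec_le_two (σ : Fin n → Bool) (j : Fin n) :
    |spinVec n σ j - bvec A β B (spinVec n σ) j| ≤ 2 := by
  refine (abs_sub _ _).trans ?_
  rw [abs_spinVec_apply, bvec]
  linarith [Real.abs_tanh_lt_one (β * mloc A (spinVec n σ) j + B)]

theorem abs_bvec_sub_bvec_update_le (x : Fin n → ℝ) (j k : Fin n) (c : ℝ) :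
    |bvec A β B x k - bvec A β B (Function.update x j c) k| ≤ |β| * |A k j| * |x j - c| := by
  refine (Real.abs_tanh_sub_tanh_le _ _).trans_eq ?_
  rw [mloc_update, ← abs_mul, ← abs_mul]
  congr 1
  ring

theorem isingExp_residual_sq_le (j : Fin n) :
    isingExp A β B (fun x => (x j - bvec A β B x j) * (x j - bvec A β B x j)) ≤ 4 := by
  refine (isingExp_mono fun σ => ?_).trans_eq (isingExp_const A β B 4)
  have h : |spinVec n σ j - bvec A β B (spinVec n σ) j| ≤ 2 := abs_spinVec_sub_bvec_le_two σ j
  rw [← abs_mul_abs_self]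
  nlinarith [abs_nonneg (spinVec n σ j - bvec A β B (spinVec n σ) j)]

theorem isingExp_residual_mul_residual_le (hA : A.IsSymm) {j k : Fin n} (hj : A j j = 0)
    (hjk : j ≠ k) :
    isingExp A β B (fun x => (x j - bvec A β B x j) * (x k - bvec A β B x k)) ≤
      2 * (|β| * |A k j|) := by
  set g : (Fin n → ℝ) → ℝ := fun x =>
    Function.update x j 0 k - bvec A β B (Function.update x j 0) k
  have hg : ∀ x c, g (Function.update x j c) = g x := fun x c => by
    simp only [g, Function.update_idem]
  have hsplit : (fun x => (x j - bvec A β B x j) * (x k - bvec A β B x k)) = fun x =>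
      (x j - bvec A β B x j) * g x + (x j - bvec A β B x j) * (x k - bvec A β B x k - g x) := by
    funext x; ring
  rw [hsplit, isingExp_add, isingExp_residual_mul_eq_zero hA hj g hg, zero_add]
  refine (isingExp_mono fun σ => ?_).trans_eq (isingExp_const A β B _)
  set x := spinVec n σ
  have hΔ : |x k - bvec A β B x k - g x| ≤ |β| * |A k j| := by
    have h := abs_bvec_sub_bvec_update_le (A := A) (β := β) (B := B) x j k 0
    rw [sub_zero, abs_spinVec_apply, mul_one] at h
    rw [← abs_neg]
    convert h using 2
    simp only [g, Function.update_of_ne hjk.symm]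
    ring
  refine (le_abs_self _).trans ?_
  rw [abs_mul]
  exact mul_le_mul (abs_spinVec_sub_bvec_le_two σ j) hΔ (abs_nonneg _) zero_le_two

theorem isingExp_sum_mloc_residual_sq_le (hA : A.IsSymm) (hdiag : ∀ i, A i i = 0)
    (hnn : ∀ i j, 0 ≤ A i j) {γ : ℝ} (hγ : ∀ i, ∑ j, A i j ≤ γ) :
    isingExp A β B (fun x => ∑ i, mloc A (fun l => x l - bvec A β B x l) i ^ 2) ≤
      (4 + 2 * |β| * γ) * ∑ i, ∑ j, A i j ^ 2 := by
  have hcov (j k : Fin n) :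
      isingExp A β B (fun x => (x j - bvec A β B x j) * (x k - bvec A β B x k)) ≤
        (if j = k then 4 else 0) + 2 * |β| * A k j := by
    rcases eq_or_ne j k with rfl | hjk
    · simpa [hdiag] using isingExp_residual_sq_le j
    · simpa [hjk, abs_of_nonneg (hnn k j), mul_assoc] using
        isingExp_residual_mul_residual_le hA (hdiag j) hjk
  simp only [mloc_sq, isingExp_sum, isingExp_const_mul]
  calc ∑ i, ∑ j, ∑ k, A i j * A i k *
        isingExp A β B (fun x => (x j - bvec A β B x j) * (x k - bvec A β B x k))
      ≤ ∑ i, ∑ j, ∑ k, A i j * A i k * ((if j = k then 4 else 0) + 2 * |β| * A k j) := by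
        gcongr with i _ j _ k _
        · exact mul_nonneg (hnn i j) (hnn i k)
        · exact hcov j k
    _ = 4 * ∑ i, ∑ j, A i j ^ 2 + 2 * |β| * ∑ i, ∑ j, ∑ k, A i j * A i k * A k j := by
        simp only [mul_add, mul_ite, mul_zero, Finset.sum_add_distrib, Finset.sum_ite_eq,
          Finset.mem_univ, if_true, Finset.mul_sum]
        congr 1
        · exact Finset.sum_congr rfl fun i _ => Finset.sum_congr rfl fun j _ => by ring
        · exact Finset.sum_congr rfl fun i _ => Finset.sum_congr rfl fun j _ =>
            Finset.sum_congr rfl fun k _ => by ring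
    _ ≤ 4 * ∑ i, ∑ j, A i j ^ 2 + 2 * |β| * (γ * ∑ i, ∑ j, A i j ^ 2) := by
        gcongr
        exact sum_mul_mul_le_mul_sum_sq hA hnn hγ
    _ = (4 + 2 * |β| * γ) * ∑ i, ∑ j, A i j ^ 2 := by ring

theorem sum_gradient_gap_sq_eq (x : Fin n → ℝ) :
    ∑ i, (β * mloc A (bvec A β B x) i + B - arctanhR (bvec A β B x i)) ^ 2 =
      β ^ 2 * ∑ i, mloc A (fun l => x l - bvec A β B x l) i ^ 2 := by
  rw [Finset.mul_sum]
  refine Finset.sum_congr rfl fun i _ => ?_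
  rw [mloc_sub, bvec, arctanhR_tanh]
  ring

theorem isingProb_gradient_gap_gt_le (hA : A.IsSymm) (hdiag : ∀ i, A i i = 0)
    (hnn : ∀ i j, 0 ≤ A i j) {γ : ℝ} (hγ : ∀ i, ∑ j, A i j ≤ γ) (hn : 0 < n) {δ : ℝ}
    (hδ : 0 < δ) :
    isingProb A β B {x | δ < √(∑ i,
        (β * mloc A (bvec A β B x) i + B - arctanhR (bvec A β B x i)) ^ 2) / √n} ≤
      β ^ 2 * (4 + 2 * |β| * γ) / δ ^ 2 * (1 / n * ∑ i, ∑ j, A i j ^ 2) := by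
  have hn' : (0 : ℝ) < n := Nat.cast_pos.2 hn
  calc _ ≤ isingExp A β B (fun x => ∑ i,
        (β * mloc A (bvec A β B x) i + B - arctanhR (bvec A β B x i)) ^ 2) / (n * δ ^ 2) := by
        refine isingProb_le_isingExp_div (by positivity)
          (fun x => Finset.sum_nonneg fun i _ => sq_nonneg _) fun x hx => ?_
        rw [Set.mem_ofPred_eq, lt_div_iff₀ (Real.sqrt_pos.2 hn'), Real.lt_sqrt (by positivity),
          mul_pow, Real.sq_sqrt hn'.le] at hx
        linarith
    _ ≤ β ^ 2 * ((4 + 2 * |β| * γ) * ∑ i, ∑ j, A i j ^ 2) / (n * δ ^ 2) := by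
        simp only [sum_gradient_gap_sq_eq, isingExp_const_mul]
        gcongr
        exact isingExp_sum_mloc_residual_sq_le hA hdiag hnn hγ
    _ = _ := by field_simp

end IsingModel

theorem stmt16_general (A : (n : ℕ) → Matrix (Fin n) (Fin n) ℝ)
    (hsymm : ∀ n, (A n).IsSymm)
    (hnonneg : ∀ n, ∀ i j : Fin n, 0 ≤ A n i j)
    (hdiag : ∀ n, ∀ i : Fin n, A n i i = 0)
    (hBD : ∃ γ : ℝ, ∀ n, ∀ i : Fin n, (∑ j, A n i j) ≤ γ)
    (hMF : Tendsto (fun n : ℕ => (1 / (n : ℝ)) * ∑ i, ∑ j, (A n i j) ^ 2) atTop (nhds 0))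
    (β B : ℝ) :
    ∀ δ > (0 : ℝ),
      Tendsto (fun n : ℕ => isingProb (A n) β B
        {x | δ < Real.sqrt (∑ i,
            (β * mloc (A n) (bvec (A n) β B x) i + B -
              arctanhR (bvec (A n) β B x i)) ^ 2) / Real.sqrt n})
        atTop (nhds 0) := by
  obtain ⟨γ, hγ⟩ := hBD
  intro δ hδ
  have hlim := hMF.const_mul (β ^ 2 * (4 + 2 * |β| * γ) / δ ^ 2)
  rw [mul_zero] at hlim
  refine squeeze_zero' (Eventually.of_forall fun n => isingProb_nonneg _) ?_ hlim
  filter_upwards [eventually_gt_atTop 0] with n hn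
  exact isingProb_gradient_gap_gt_le (hsymm n) (hdiag n) (hnonneg n) (hγ n) hn hδ

/-- `‖∇f_n(b(X)) - ∇I(b(X))‖/√n → 0` in probability. -/
theorem stmt16 (A : (n : ℕ) → Matrix (Fin n) (Fin n) ℝ)
    (hsymm : ∀ n, (A n).IsSymm)
    (hnonneg : ∀ n, ∀ i j : Fin n, 0 ≤ A n i j)
    (hdiag : ∀ n, ∀ i : Fin n, A n i i = 0)
    (hBD : ∃ γ : ℝ, ∀ n, ∀ i : Fin n, (∑ j, A n i j) ≤ γ)
    (hMF : Tendsto (fun n : ℕ => (1 / (n : ℝ)) * ∑ i, ∑ j, (A n i j) ^ 2) atTop (nhds 0))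
    (β B : ℝ) (hβ : 0 < β) (hB : B ≠ 0) :
    ∀ δ > (0 : ℝ),
      Tendsto (fun n : ℕ => isingProb (A n) β B
        {x | δ < Real.sqrt (∑ i,
            (β * mloc (A n) (bvec (A n) β B x) i + B -
              arctanhR (bvec (A n) β B x i)) ^ 2) / Real.sqrt n})
        atTop (nhds 0) :=
  stmt16_general A hsymm hnonneg hdiag hBD hMF β B
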